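/- For all integers n ≥ 0 and k ≥ 1, the alternating degenerate power sum at even arguments satisfies T_{k,λ}(2n) = (1/2) · (2n+1)_{k,λ} + 2 · ∑_{j=1}^{k} (−1)^j · j! · (1/2)^{j+1} · S_{2,λ}(k,j) + ∑_{j=1}^{k−1} C(k,j) · (2n+1)_{k−j,λ} · ∑_{i=1}^{j} (−1)^i · i! · (1/2)^{i+1} · S_{2,λ}(j,i). -/

import Mathlib

open Finset

noncomputable section

/-- The generalized falling factorial `(x)_{n,λ} = x(x-λ)⋯(x-(n-1)λ)`. -/
def gff (lam x : ℝ) (n : ℕ) : ℝ := ∏ i ∈ Finset.range n, (x - i * lam)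

/-- The ordinary falling factorial `(x)_r = x(x-1)⋯(x-r+1)` of a real number. -/
def ff (x : ℝ) (r : ℕ) : ℝ := ∏ i ∈ Finset.range r, (x - i)

/-- The degenerate exponential `e_λ^x(t) = ∑_{n≥0} (x)_{n,λ} t^n/n!` as a formal power series. -/
def degExp (lam x : ℝ) : PowerSeries ℝ :=
  PowerSeries.mk fun n => gff lam x n / n.factorial

/-- `egfCoeff f n = a_n` when `f = ∑_{n≥0} a_n t^n/n!`. -/
def egfCoeff (f : PowerSeries ℝ) (n : ℕ) : ℝ := n.factorial * PowerSeries.coeff (R := ℝ) n f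

/-- The formal binomial power `(1+g)^a = ∑_{k≥0} (a)_k/k! · g^k`,
intended for `g` with zero constant term (so the sum is coefficientwise finite). -/
def binomPow (a : ℝ) (g : PowerSeries ℝ) : PowerSeries ℝ :=
  PowerSeries.mk fun n =>
    ∑ k ∈ Finset.range (n + 1), (ff a k / k.factorial) * PowerSeries.coeff (R := ℝ) n (g ^ k)

/-- `(2/(e_λ(t)+1))^α`, the `(-α)`-th formal binomial power of `(e_λ(t)+1)/2 = 1 + (e_λ(t)-1)/2`. -/
def eulerGF (lam a : ℝ) : PowerSeries ℝ :=
  binomPow (-a) (PowerSeries.C (R := ℝ) (1 / 2) * (degExp lam 1 - 1))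

/-- Generalized degenerate Euler-Genocchi polynomials `A^{(r)}_{n,λ}(x)`, defined by
`∑_{n≥0} A^{(r)}_{n,λ}(x) t^n/n! = 2 t^r e_λ^x(t)/(e_λ(t)+1)`. -/
def A (lam : ℝ) (r : ℕ) (x : ℝ) (n : ℕ) : ℝ :=
  egfCoeff (2 * PowerSeries.X ^ r * degExp lam x * (degExp lam 1 + 1)⁻¹) n

/-- Generalized degenerate Euler-Genocchi polynomials of order `α`, `A^{(r,α)}_{n,λ}(x)`,
defined by `∑_{n≥0} A^{(r,α)}_{n,λ}(x) t^n/n! = t^r (2/(e_λ(t)+1))^α e_λ^x(t)`. -/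
def Aa (lam a : ℝ) (r : ℕ) (x : ℝ) (n : ℕ) : ℝ :=
  egfCoeff (PowerSeries.X ^ r * eulerGF lam a * degExp lam x) n

/-- Degenerate Euler polynomials of order `α`:
`∑_{n≥0} E^{(α)}_{n,λ}(x) t^n/n! = (2/(e_λ(t)+1))^α e_λ^x(t)`. -/
def Epoly (lam a x : ℝ) (n : ℕ) : ℝ := egfCoeff (eulerGF lam a * degExp lam x) n

/-- Degenerate Euler polynomials `E_{n,λ}(x)`:
`∑_{n≥0} E_{n,λ}(x) t^n/n! = 2 e_λ^x(t)/(e_λ(t)+1)`. -/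
def E1 (lam x : ℝ) (n : ℕ) : ℝ :=
  egfCoeff (2 * degExp lam x * (degExp lam 1 + 1)⁻¹) n

/-- Degenerate Euler numbers `E_{n,λ}`: `∑_{n≥0} E_{n,λ} t^n/n! = 2/(e_λ(t)+1)`. -/
def Enum (lam : ℝ) (n : ℕ) : ℝ :=
  egfCoeff (2 * (degExp lam 1 + 1)⁻¹) n

/-- Degenerate Stirling numbers of the second kind:
`∑_{n≥k} S_{2,λ}(n,k) t^n/n! = (1/k!)(e_λ(t)-1)^k`. -/
def S2 (lam : ℝ) (n k : ℕ) : ℝ :=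
  egfCoeff (PowerSeries.C (R := ℝ) (1 / k.factorial) * (degExp lam 1 - 1) ^ k) n

/-- Alternating degenerate power sum `T_{k,λ}(n) = ∑_{i=0}^n (-1)^i (i)_{k,λ}`. -/
def T (lam : ℝ) (k n : ℕ) : ℝ := ∑ i ∈ Finset.range (n + 1), (-1 : ℝ) ^ i * gff lam i k

/-!
`T_{k,λ}(2n)` is an alternating sum of `(i)_{k,λ}`, and `(x)_{k,λ}` is the average of the
degenerate Euler polynomials at `x` and `x + 1`, because `e_λ^{x+1}(t) = e_λ^x(t) e_λ(t)`. The
sum telescopes to `(E_{k,λ}(2n+1) + E_{k,λ})/2`, and expanding `E_{k,λ}(2n+1)` binomially leaves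
the degenerate Euler numbers `E_{j,λ}`. Finally `2/(e_λ(t)+1) = 1/(1 + (e_λ(t)-1)/2)` is a
geometric series in `(e_λ(t)-1)/2`, whose `i`-th power is `i!/2^i` times the generating function
of `S_{2,λ}(·,i)`; this gives `E_{j,λ} = ∑_i (-1)^i i! 2^{-i} S_{2,λ}(j,i)`.
-/

open PowerSeries

theorem Finset.sum_range_neg_one_pow_mul_add {R : Type*} [CommRing R] (f : ℕ → R) (N : ℕ) :
    ∑ i ∈ range N, (-1 : R) ^ i * (f (i + 1) + f i) = f 0 - (-1) ^ N * f N := by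
  have hterm : ∀ i, (-1 : R) ^ i * (f (i + 1) + f i)
      = -(-1) ^ (i + 1) * f (i + 1) - -(-1) ^ i * f i := fun i => by ring
  rw [sum_congr rfl fun i _ => hterm i, sum_range_sub (fun i => -(-1 : R) ^ i * f i)]
  ring

theorem Finset.sum_range_succ_eq_add_sum_Icc_add {M : Type*} [AddCommMonoid M] (f : ℕ → M)
    {k : ℕ} (hk : 1 ≤ k) :
    ∑ j ∈ range (k + 1), f j = f 0 + ∑ j ∈ Icc 1 (k - 1), f j + f k := by
  obtain ⟨m, rfl⟩ := Nat.exists_eq_add_of_le' hk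
  rw [sum_range_succ, range_eq_Ico, sum_eq_sum_Ico_succ_bot (Nat.succ_pos m),
    ← Ico_add_one_right_eq_Icc, Nat.add_sub_cancel]
  rfl

theorem PowerSeries.coeff_inv_one_sub {K : Type*} [Field K] {v : K⟦X⟧}
    (hv : constantCoeff v = 0) (j : ℕ) :
    coeff j (1 - v)⁻¹ = ∑ i ∈ range (j + 1), coeff j (v ^ i) := by
  have hinv : (1 - v) * (1 - v)⁻¹ = 1 := PowerSeries.mul_inv_cancel _ (by simp [hv])
  have hsplit : (1 - v)⁻¹ = ∑ i ∈ range (j + 1), v ^ i + v ^ (j + 1) * (1 - v)⁻¹ := by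
    linear_combination (∑ i ∈ range (j + 1), v ^ i) * hinv
      - (1 - v)⁻¹ * mul_neg_geom_sum v (j + 1)
  have htail : X ^ (j + 1) ∣ v ^ (j + 1) * (1 - v)⁻¹ :=
    (pow_dvd_pow_of_dvd (X_dvd_iff.mpr hv) _).mul_right _
  rw [hsplit, map_add, map_sum, X_pow_dvd_iff.mp htail j j.lt_succ_self, add_zero]

section gff

variable (lam : ℝ)

@[simp]
theorem gff_zero (x : ℝ) : gff lam x 0 = 1 := prod_range_zero _

theorem gff_succ (x : ℝ) (m : ℕ) : gff lam x (m + 1) = gff lam x m * (x - m * lam) :=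
  prod_range_succ _ _

theorem gff_zero_left {m : ℕ} (hm : m ≠ 0) : gff lam 0 m = 0 :=
  prod_eq_zero (mem_range.2 (Nat.pos_of_ne_zero hm)) (by simp)

theorem gff_add (x y : ℝ) (m : ℕ) :
    gff lam (x + y) m =
      ∑ j ∈ range (m + 1), (m.choose j : ℝ) * gff lam x j * gff lam y (m - j) := by
  induction m with
  | zero => simp
  | succ m ih =>
    simp only [mul_assoc]
    rw [gff_succ, ih, sum_choose_succ_mul (fun i j => gff lam x i * gff lam y j), sum_mul,
      ← sum_add_distrib]
    refine sum_congr rfl fun j hj => ?_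
    have hjm : j ≤ m := Nat.lt_succ_iff.mp (mem_range.mp hj)
    rw [Nat.sub_add_comm hjm, gff_succ, gff_succ, Nat.cast_sub hjm]
    ring

end gff

theorem egfCoeff_injective : Function.Injective egfCoeff := fun f g h => by
  ext m
  exact mul_left_cancel₀ (Nat.cast_ne_zero.2 m.factorial_ne_zero) (congrFun h m)

theorem egfCoeff_add (f g : ℝ⟦X⟧) (m : ℕ) :
    egfCoeff (f + g) m = egfCoeff f m + egfCoeff g m := by
  simp [egfCoeff, mul_add]

theorem egfCoeff_C_mul (c : ℝ) (f : ℝ⟦X⟧) (m : ℕ) :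
    egfCoeff (C c * f) m = c * egfCoeff f m := by
  simp only [egfCoeff, coeff_C_mul]
  ring

theorem egfCoeff_ofNat_mul (c : ℕ) [c.AtLeastTwo] (f : ℝ⟦X⟧) (m : ℕ) :
    egfCoeff (OfNat.ofNat c * f) m = OfNat.ofNat c * egfCoeff f m := by
  rw [← map_ofNat C, egfCoeff_C_mul]

theorem egfCoeff_mul (f g : ℝ⟦X⟧) (m : ℕ) :
    egfCoeff (f * g) m =
      ∑ j ∈ range (m + 1), (m.choose j : ℝ) * egfCoeff f j * egfCoeff g (m - j) := by
  rw [egfCoeff, coeff_mul, Nat.sum_antidiagonal_eq_sum_range_succ_mk, mul_sum]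
  refine sum_congr rfl fun j hj => ?_
  have h := Nat.choose_mul_factorial_mul_factorial (Nat.lt_succ_iff.mp (mem_range.mp hj))
  rw [← congrArg (Nat.cast (R := ℝ)) h, egfCoeff, egfCoeff]
  push_cast
  ring

theorem egfCoeff_degExp (lam x : ℝ) (m : ℕ) : egfCoeff (degExp lam x) m = gff lam x m := by
  rw [egfCoeff, degExp, coeff_mk]
  field_simp

section degExp

variable (lam : ℝ)

theorem constantCoeff_degExp (x : ℝ) : constantCoeff (degExp lam x) = 1 := by
  simp [degExp]

theorem degExp_add (x y : ℝ) : degExp lam (x + y) = degExp lam x * degExp lam y :=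
  egfCoeff_injective <| funext fun m => by
    simp only [egfCoeff_mul, egfCoeff_degExp, gff_add]

theorem degExp_zero : degExp lam 0 = 1 :=
  egfCoeff_injective <| funext fun m => by
    rw [egfCoeff_degExp]
    rcases eq_or_ne m 0 with rfl | hm
    · simp [egfCoeff]
    · simp [gff_zero_left lam hm, egfCoeff, coeff_one, hm]

theorem degExp_one_add_one_mul_inv : (degExp lam 1 + 1) * (degExp lam 1 + 1)⁻¹ = 1 :=
  PowerSeries.mul_inv_cancel _ (by rw [map_add, constantCoeff_degExp, map_one]; norm_num)

end degExp

section Euler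

variable (lam : ℝ)

theorem E1_add_one_add_E1 (x : ℝ) (m : ℕ) :
    E1 lam (x + 1) m + E1 lam x m = 2 * gff lam x m := by
  have h : 2 * degExp lam (x + 1) * (degExp lam 1 + 1)⁻¹
      + 2 * degExp lam x * (degExp lam 1 + 1)⁻¹ = 2 * degExp lam x := by
    rw [degExp_add]
    linear_combination (2 * degExp lam x) * degExp_one_add_one_mul_inv lam
  rw [E1, E1, ← egfCoeff_add, h, egfCoeff_ofNat_mul, egfCoeff_degExp]

theorem E1_zero (m : ℕ) : E1 lam 0 m = Enum lam m := by
  rw [E1, Enum, degExp_zero, mul_one]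

theorem E1_eq_sum (x : ℝ) (m : ℕ) :
    E1 lam x m = ∑ j ∈ range (m + 1), (m.choose j : ℝ) * Enum lam j * gff lam x (m - j) := by
  rw [E1, mul_right_comm, egfCoeff_mul]
  simp only [egfCoeff_degExp, Enum]

theorem Enum_zero : Enum lam 0 = 1 := by
  rw [Enum, egfCoeff, coeff_zero_eq_constantCoeff_apply, map_mul, map_ofNat, constantCoeff_inv,
    map_add, constantCoeff_degExp, map_one]
  norm_num

theorem T_two_mul (k n : ℕ) :
    T lam k (2 * n) = (E1 lam (2 * n + 1) k + Enum lam k) / 2 := by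
  have h := sum_range_neg_one_pow_mul_add (fun i : ℕ => E1 lam i k) (2 * n + 1)
  simp only [Nat.cast_add, Nat.cast_one, E1_add_one_add_E1, Nat.cast_zero, E1_zero,
    (Odd.neg_one_pow ⟨n, rfl⟩ : (-1 : ℝ) ^ (2 * n + 1) = -1), mul_left_comm _ (2 : ℝ),
    ← mul_sum] at h
  push_cast at h
  rw [T]
  linear_combination h / 2

end Euler

section Stirling

variable (lam : ℝ)

theorem two_mul_inv_degExp_one_add_one :
    2 * (degExp lam 1 + 1)⁻¹ = (1 - C (-(1 / 2)) * (degExp lam 1 - 1))⁻¹ := by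
  have hhalf : C (1 / 2 : ℝ) * 2 = 1 := by rw [← map_ofNat C 2, ← map_mul]; norm_num
  have hv : 1 - C (-(1 / 2)) * (degExp lam 1 - 1) = C (1 / 2) * (degExp lam 1 + 1) := by
    rw [map_neg]
    linear_combination -hhalf
  rw [PowerSeries.eq_inv_iff_mul_eq_one (by simp [constantCoeff_degExp]), hv]
  linear_combination (C (1 / 2 : ℝ) * 2) * degExp_one_add_one_mul_inv lam + hhalf

theorem Enum_eq_sum_S2 (j : ℕ) :
    Enum lam j =
      ∑ i ∈ range (j + 1), (-1) ^ i * (i.factorial : ℝ) * (1 / 2) ^ i * S2 lam j i := by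
  have hv : constantCoeff (C (-(1 / 2) : ℝ) * (degExp lam 1 - 1)) = 0 := by
    simp [constantCoeff_degExp]
  rw [Enum, two_mul_inv_degExp_one_add_one, egfCoeff, coeff_inv_one_sub hv, mul_sum]
  refine sum_congr rfl fun i _ => ?_
  rw [← egfCoeff, mul_pow, ← map_pow, egfCoeff_C_mul, S2, egfCoeff_C_mul, neg_pow]
  field_simp

theorem S2_zero_right {j : ℕ} (hj : j ≠ 0) : S2 lam j 0 = 0 := by
  simp [S2, egfCoeff, coeff_one, hj]

theorem sum_Icc_S2_eq_Enum_div_two {j : ℕ} (hj : 1 ≤ j) :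
    ∑ i ∈ Icc 1 j, (-1 : ℝ) ^ i * (i.factorial : ℝ) * (1 / 2 : ℝ) ^ (i + 1) * S2 lam j i
      = Enum lam j / 2 := by
  rw [Enum_eq_sum_S2, range_eq_Ico, sum_eq_sum_Ico_succ_bot j.succ_pos,
    S2_zero_right lam (Nat.one_le_iff_ne_zero.mp hj), mul_zero, zero_add, sum_div,
    ← Ico_add_one_right_eq_Icc]
  exact sum_congr rfl fun i _ => by ring

end Stirling

theorem T_even_general (lam : ℝ) (n k : ℕ) (hk : 1 ≤ k) :
    T lam k (2 * n) =
      (1 / 2 : ℝ) * gff lam (2 * (n : ℝ) + 1) k +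
        2 * ∑ j ∈ Finset.Icc 1 k,
            (-1 : ℝ) ^ j * (j.factorial : ℝ) * (1 / 2 : ℝ) ^ (j + 1) * S2 lam k j +
        ∑ j ∈ Finset.Icc 1 (k - 1),
          (k.choose j : ℝ) * gff lam (2 * (n : ℝ) + 1) (k - j) *
            ∑ i ∈ Finset.Icc 1 j,
              (-1 : ℝ) ^ i * (i.factorial : ℝ) * (1 / 2 : ℝ) ^ (i + 1) * S2 lam j i := by
  have hmiddle : ∑ j ∈ Icc 1 (k - 1), (k.choose j : ℝ) * gff lam (2 * n + 1) (k - j) *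
        ∑ i ∈ Icc 1 j, (-1 : ℝ) ^ i * (i.factorial : ℝ) * (1 / 2 : ℝ) ^ (i + 1) *
          S2 lam j i =
      (∑ j ∈ Icc 1 (k - 1), (k.choose j : ℝ) * Enum lam j * gff lam (2 * n + 1) (k - j)) /
        2 := by
    rw [sum_div]
    refine sum_congr rfl fun j hj => ?_
    rw [sum_Icc_S2_eq_Enum_div_two lam (mem_Icc.mp hj).1]
    ring
  rw [T_two_mul, E1_eq_sum, sum_range_succ_eq_add_sum_Icc_add _ hk, hmiddle,
    sum_Icc_S2_eq_Enum_div_two lam hk]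
  simp only [Nat.choose_zero_right, Nat.choose_self, Enum_zero, Nat.sub_zero, Nat.sub_self,
    gff_zero, Nat.cast_one]
  ring

/-- equation (43) of the paper: for `n ≥ 0`, `k ≥ 1`,
`T_{k,λ}(2n) = (1/2)(2n+1)_{k,λ} + 2 ∑_{j=1}^k (-1)^j j! (1/2)^{j+1} S_{2,λ}(k,j)
 + ∑_{j=1}^{k-1} C(k,j)(2n+1)_{k-j,λ} ∑_{i=1}^j (-1)^i i! (1/2)^{i+1} S_{2,λ}(j,i)`. -/
theorem T_even (lam : ℝ) (hlam : lam ≠ 0) (n k : ℕ) (hk : 1 ≤ k) :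
    T lam k (2 * n) =
      (1 / 2 : ℝ) * gff lam (2 * (n : ℝ) + 1) k +
        2 * ∑ j ∈ Finset.Icc 1 k,
            (-1 : ℝ) ^ j * (j.factorial : ℝ) * (1 / 2 : ℝ) ^ (j + 1) * S2 lam k j +
        ∑ j ∈ Finset.Icc 1 (k - 1),
          (k.choose j : ℝ) * gff lam (2 * (n : ℝ) + 1) (k - j) *
            ∑ i ∈ Finset.Icc 1 j,
              (-1 : ℝ) ^ i * (i.factorial : ℝ) * (1 / 2 : ℝ) ^ (i + 1) * S2 lam j i :=
  T_even_general lam n k hk
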